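/- arXiv:1710.06906 — 4 statements merged into one kernel-verified Lean document; each statement's English description precedes it below -/
import Mathlib

section
/- Fix \alpha \in (0,1] and a real x > 0, and for each n let m(n) = \lfloor \alpha n \rfloor. With r_1, r_2, r_3, r_{12} formed from a_n(x), b_n(x), c_n(x) and a_{m(n)}(x), b_{m(n)}(x), c_{m(n)}(x), one has (r_1^2 + r_2^2 - 2 r_{12}^2) / (x \, r_3^2 \sqrt{(r_1+r_2)^2 - 4 r_{12}^2}) \to \sqrt{x+1}/2 as n \to \infty. -/
open Filter

/-- `aa k x = ∑_{j=0}^k x^j / j!` -/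
noncomputable def aa (k : ℕ) (x : ℝ) : ℝ := ∑ j ∈ Finset.range (k + 1), x ^ j / (Nat.factorial j)

/-- `bb k x = ∑_{j=1}^k j x^j / j!` -/
noncomputable def bb (k : ℕ) (x : ℝ) : ℝ := ∑ j ∈ Finset.Icc 1 k, (j : ℝ) * x ^ j / (Nat.factorial j)

/-- `cc k x = ∑_{j=1}^k j² x^j / j!` -/
noncomputable def cc (k : ℕ) (x : ℝ) : ℝ := ∑ j ∈ Finset.Icc 1 k, (j : ℝ) ^ 2 * x ^ j / (Nat.factorial j)

noncomputable def r3 (n m : ℕ) (x : ℝ) : ℝ := aa n x + aa m x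
noncomputable def r12 (n m : ℕ) (x : ℝ) : ℝ := bb n x * bb m x
noncomputable def r1 (n m : ℕ) (x : ℝ) : ℝ := r3 n m x * cc n x - (bb n x) ^ 2
noncomputable def r2 (n m : ℕ) (x : ℝ) : ℝ := r3 n m x * cc m x - (bb m x) ^ 2

/-- The first-intensity (Kac–Rice) integrand of a Weyl random harmonic polynomial of
bidegree `(n, m)`, evaluated at `z`, with `x = |z|²`. -/
noncomputable def F (n m : ℕ) (z : ℂ) : ℝ :=
  (1 / ‖z‖ ^ 2) *
    (((r1 n m (‖z‖ ^ 2)) ^ 2 + (r2 n m (‖z‖ ^ 2)) ^ 2 - 2 * (r12 n m (‖z‖ ^ 2)) ^ 2) /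
      ((r3 n m (‖z‖ ^ 2)) ^ 2 *
        Real.sqrt ((r1 n m (‖z‖ ^ 2) + r2 n m (‖z‖ ^ 2)) ^ 2 - 4 * (r12 n m (‖z‖ ^ 2)) ^ 2)))

/-- The expected number of zeros in `ℂ`, as given by the Kac–Rice formula. -/
noncomputable def I (n m : ℕ) : ℝ := (1 / Real.pi) * ∫ z : ℂ, F n m z

/-!
Since `b_{k+1}(x) = x a_k(x)` and `c_{k+1}(x) = x (a_k(x) + b_k(x))`, the exponential series gives
`a_k → eˣ`, `b_k → x eˣ` and `c_k → x (x + 1) eˣ`. So as `n` and `m` tend to infinity independently,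
`r₃ → 2eˣ`, `r₁, r₂ → x (x + 2) e²ˣ` and `r₁₂ → x² e²ˣ`; the expression is continuous there, with
value `√(x + 1) / 2`. Finally `⌊α n⌋ → ∞` because `α > 0`.
-/

open Topology Finset Nat

lemma Finset.sum_Icc_one_eq_sum_range {M : Type*} [AddCommMonoid M] (f : ℕ → M) (k : ℕ) :
    ∑ j ∈ Icc 1 k, f j = ∑ i ∈ range k, f (i + 1) := by
  rw [range_eq_Ico, sum_Ico_add', zero_add, Ico_add_one_right_eq_Icc]

lemma Finset.sum_range_succ_eq_sum_Icc_one {M : Type*} [AddCommMonoid M] {f : ℕ → M}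
    (hf : f 0 = 0) (k : ℕ) : ∑ i ∈ range (k + 1), f i = ∑ j ∈ Icc 1 k, f j := by
  rw [sum_range_succ', hf, add_zero, sum_Icc_one_eq_sum_range]

lemma succ_mul_pow_succ_div_factorial (x : ℝ) (i : ℕ) :
    ((i + 1 : ℕ) : ℝ) * x ^ (i + 1) / (i + 1)! = x * (x ^ i / i !) := by
  rw [factorial_succ, cast_mul]
  field_simp
  ring

theorem tendsto_aa (x : ℝ) : Tendsto (fun k => aa k x) atTop (𝓝 (Real.exp x)) := by
  rw [Real.exp_eq_exp_ℝ]
  exact (tendsto_add_atTop_iff_nat 1).2 (NormedSpace.expSeries_div_hasSum_exp x).tendsto_sum_nat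

theorem bb_succ (k : ℕ) (x : ℝ) : bb (k + 1) x = x * aa k x := by
  rw [bb, sum_Icc_one_eq_sum_range, aa, mul_sum]
  exact sum_congr rfl fun i _ => succ_mul_pow_succ_div_factorial x i

theorem cc_succ (k : ℕ) (x : ℝ) : cc (k + 1) x = x * (aa k x + bb k x) := by
  rw [cc, sum_Icc_one_eq_sum_range, aa, bb, ← sum_range_succ_eq_sum_Icc_one (by simp),
    ← sum_add_distrib, mul_sum]
  refine sum_congr rfl fun i _ => ?_
  rw [pow_two, mul_assoc, mul_div_assoc, succ_mul_pow_succ_div_factorial]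
  push_cast
  ring

theorem tendsto_bb (x : ℝ) : Tendsto (fun k => bb k x) atTop (𝓝 (x * Real.exp x)) :=
  (tendsto_add_atTop_iff_nat 1).1 <| by
    simpa only [bb_succ] using (tendsto_aa x).const_mul x

theorem tendsto_cc (x : ℝ) :
    Tendsto (fun k => cc k x) atTop (𝓝 (x * (Real.exp x + x * Real.exp x))) :=
  (tendsto_add_atTop_iff_nat 1).1 <| by
    simpa only [cc_succ] using ((tendsto_aa x).add (tendsto_bb x)).const_mul x

noncomputable def intensityRatio (x r₁ r₂ r₃ r₁₂ : ℝ) : ℝ :=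
  (r₁ ^ 2 + r₂ ^ 2 - 2 * r₁₂ ^ 2) / (x * r₃ ^ 2 * Real.sqrt ((r₁ + r₂) ^ 2 - 4 * r₁₂ ^ 2))

theorem Filter.Tendsto.intensityRatio {ι : Type*} {l : Filter ι} {f₁ f₂ f₃ f₁₂ : ι → ℝ}
    {x u₁ u₂ u₃ u₁₂ : ℝ} (h₁ : Tendsto f₁ l (𝓝 u₁)) (h₂ : Tendsto f₂ l (𝓝 u₂))
    (h₃ : Tendsto f₃ l (𝓝 u₃)) (h₁₂ : Tendsto f₁₂ l (𝓝 u₁₂))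
    (hden : x * u₃ ^ 2 * Real.sqrt ((u₁ + u₂) ^ 2 - 4 * u₁₂ ^ 2) ≠ 0) :
    Tendsto (fun i => intensityRatio x (f₁ i) (f₂ i) (f₃ i) (f₁₂ i)) l
      (𝓝 (intensityRatio x u₁ u₂ u₃ u₁₂)) := by
  have hnum := ((h₁.pow 2).add (h₂.pow 2)).sub ((h₁₂.pow 2).const_mul 2)
  have hdisc := ((h₁.add h₂).pow 2).sub ((h₁₂.pow 2).const_mul 4)
  exact hnum.div (((h₃.pow 2).const_mul x).mul ((Real.continuous_sqrt.tendsto _).comp hdisc)) hden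

lemma sqrt_disc_limit {x : ℝ} (hx : 0 ≤ x) (E : ℝ) :
    Real.sqrt ((x * (x + 2) * E ^ 2 + x * (x + 2) * E ^ 2) ^ 2 - 4 * ((x * E) ^ 2) ^ 2) =
      4 * x * E ^ 2 * Real.sqrt (x + 1) := by
  rw [show (x * (x + 2) * E ^ 2 + x * (x + 2) * E ^ 2) ^ 2 - 4 * ((x * E) ^ 2) ^ 2 =
      (4 * x * E ^ 2) ^ 2 * (x + 1) by ring,
    Real.sqrt_mul (sq_nonneg _), Real.sqrt_sq (by positivity)]

lemma intensityRatio_limit {x E : ℝ} (hx : 0 < x) (hE : 0 < E) :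
    intensityRatio x (x * (x + 2) * E ^ 2) (x * (x + 2) * E ^ 2) (2 * E) ((x * E) ^ 2) =
      Real.sqrt (x + 1) / 2 := by
  rw [intensityRatio, sqrt_disc_limit hx.le, div_eq_div_iff (by positivity) two_ne_zero]
  linear_combination (-16 * x ^ 2 * E ^ 4) * Real.sq_sqrt (show 0 ≤ x + 1 by linarith)

theorem tendsto_intensityRatio_atTop_prod {x : ℝ} (hx : 0 < x) :
    Tendsto (fun p : ℕ × ℕ => intensityRatio x (r1 p.1 p.2 x) (r2 p.1 p.2 x) (r3 p.1 p.2 x)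
      (r12 p.1 p.2 x)) (atTop ×ˢ atTop : Filter (ℕ × ℕ)) (𝓝 (Real.sqrt (x + 1) / 2)) := by
  set E := Real.exp x
  have hE : 0 < E := Real.exp_pos x
  have hfst : Tendsto Prod.fst (atTop ×ˢ atTop : Filter (ℕ × ℕ)) atTop := tendsto_fst
  have hsnd : Tendsto Prod.snd (atTop ×ˢ atTop : Filter (ℕ × ℕ)) atTop := tendsto_snd
  have hb₁ := (tendsto_bb x).comp hfst
  have hb₂ := (tendsto_bb x).comp hsnd
  have hr_lim : x * (x + 2) * E ^ 2 = 2 * E * (x * (E + x * E)) - (x * E) ^ 2 := by ring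
  have h₃ : Tendsto (fun p : ℕ × ℕ => r3 p.1 p.2 x) (atTop ×ˢ atTop) (𝓝 (2 * E)) := by
    rw [two_mul]; exact ((tendsto_aa x).comp hfst).add ((tendsto_aa x).comp hsnd)
  have h₁ : Tendsto (fun p : ℕ × ℕ => r1 p.1 p.2 x) (atTop ×ˢ atTop)
      (𝓝 (x * (x + 2) * E ^ 2)) := by
    rw [hr_lim]; exact (h₃.mul ((tendsto_cc x).comp hfst)).sub (hb₁.pow 2)
  have h₂ : Tendsto (fun p : ℕ × ℕ => r2 p.1 p.2 x) (atTop ×ˢ atTop)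
      (𝓝 (x * (x + 2) * E ^ 2)) := by
    rw [hr_lim]; exact (h₃.mul ((tendsto_cc x).comp hsnd)).sub (hb₂.pow 2)
  have h₁₂ : Tendsto (fun p : ℕ × ℕ => r12 p.1 p.2 x) (atTop ×ˢ atTop) (𝓝 ((x * E) ^ 2)) := by
    rw [sq]; exact hb₁.mul hb₂
  rw [← intensityRatio_limit hx hE]
  refine h₁.intensityRatio h₂ h₃ h₁₂ ?_
  rw [sqrt_disc_limit hx.le]
  positivity

theorem weyl_pointwise_fixed_x_general (α x : ℝ) (hα0 : 0 < α) (hx : 0 < x) :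
    Tendsto
      (fun n : ℕ =>
        ((r1 n ⌊α * n⌋₊ x) ^ 2 + (r2 n ⌊α * n⌋₊ x) ^ 2 - 2 * (r12 n ⌊α * n⌋₊ x) ^ 2) /
          (x * (r3 n ⌊α * n⌋₊ x) ^ 2 *
            Real.sqrt ((r1 n ⌊α * n⌋₊ x + r2 n ⌊α * n⌋₊ x) ^ 2 - 4 * (r12 n ⌊α * n⌋₊ x) ^ 2)))
      atTop (nhds (Real.sqrt (x + 1) / 2)) := by
  have hm : Tendsto (fun n : ℕ => ⌊α * n⌋₊) atTop atTop :=
    tendsto_nat_floor_atTop.comp (tendsto_natCast_atTop_atTop.const_mul_atTop hα0)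
  have hlim := (tendsto_intensityRatio_atTop_prod hx).comp (tendsto_id.prodMk hm)
  exact hlim

/-- For fixed `x > 0`, `α ∈ (0,1]` and `m(n) = ⌊α n⌋`, the first intensity expression
converges pointwise to `√(x+1)/2` as `n → ∞`. -/
theorem weyl_pointwise_fixed_x (α x : ℝ) (hα0 : 0 < α) (hα1 : α ≤ 1) (hx : 0 < x) :
    Tendsto
      (fun n : ℕ =>
        ((r1 n ⌊α * n⌋₊ x) ^ 2 + (r2 n ⌊α * n⌋₊ x) ^ 2 - 2 * (r12 n ⌊α * n⌋₊ x) ^ 2) /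
          (x * (r3 n ⌊α * n⌋₊ x) ^ 2 *
            Real.sqrt ((r1 n ⌊α * n⌋₊ x + r2 n ⌊α * n⌋₊ x) ^ 2 - 4 * (r12 n ⌊α * n⌋₊ x) ^ 2)))
      atTop (nhds (Real.sqrt (x + 1) / 2)) :=
  weyl_pointwise_fixed_x_general α x hα0 hx
end

section
/- Fix \alpha \in (0,1] and a real t with 0 < t < \alpha, and for each n let m(n) = \lfloor \alpha n \rfloor. With r_1, r_2, r_3, r_{12} formed from a_n, b_n, c_n and a_{m(n)}, b_{m(n)}, c_{m(n)}, all evaluated at x = nt, one has (r_1^2 + r_2^2 - 2 r_{12}^2) / (n^{3/2} \, t \, r_3^2 \sqrt{(r_1+r_2)^2 - 4 r_{12}^2}) \to \sqrt{t}/2 as n \to \infty. -/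
open Filter

lemma aa_succ (k : ℕ) (x : ℝ) : aa (k+1) x = aa k x + x^(k+1)/(Nat.factorial (k+1)) := by
  simp [aa, Finset.sum_range_succ]

lemma bb_eq (k : ℕ) (x : ℝ) : bb (k+1) x = x * aa k x := by
  induction k with
  | zero => simp [bb, aa]
  | succ k ih =>
    rw [show k+1+1 = (k+1)+1 from rfl, bb, Finset.sum_Icc_succ_top (by omega), ← bb, ih, aa_succ]
    have h : ((k+1+1:ℕ):ℝ) * x^(k+1+1) / (Nat.factorial (k+1+1)) = x * (x^(k+1)/(Nat.factorial (k+1))) := by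
      rw [Nat.factorial_succ (k+1)]
      push_cast
      field_simp
      ring
    rw [h]; ring

lemma cc_eq (k : ℕ) (x : ℝ) : cc (k+2) x = x^2 * aa k x + x * aa (k+1) x := by
  induction k with
  | zero =>
    show cc 2 x = _
    rw [cc, show Finset.Icc 1 2 = {1, 2} from rfl]
    simp [aa, Finset.sum_range_succ]
    norm_num
    ring
  | succ k ih =>
    rw [show k+1+2 = (k+2)+1 from rfl, cc, Finset.sum_Icc_succ_top (by omega), ← cc, ih]
    rw [aa_succ (k+1) x, aa_succ k x]
    have h : ((k+2+1:ℕ):ℝ)^2 * x^(k+2+1) / (Nat.factorial (k+2+1)) =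
        x^2 * (x^(k+1)/(Nat.factorial (k+1))) + x * (x^(k+2)/(Nat.factorial (k+2))) := by
      rw [Nat.factorial_succ (k+2), Nat.factorial_succ (k+1)]
      push_cast
      field_simp
      ring
    rw [h]; ring


lemma exp_tsum (x : ℝ) : Real.exp x = ∑' j : ℕ, x^j/(Nat.factorial j) := by
  rw [Real.exp_eq_exp_ℝ, NormedSpace.exp_eq_tsum_div]

lemma aa_le_exp {x : ℝ} (hx : 0 ≤ x) (k : ℕ) : aa k x ≤ Real.exp x :=
  Real.sum_le_exp_of_nonneg hx (k+1)

lemma term_le_exp {x : ℝ} (hx : 0 ≤ x) (k : ℕ) : x^k/(Nat.factorial k) ≤ Real.exp x := by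
  refine le_trans ?_ (aa_le_exp hx k)
  unfold aa
  refine Finset.single_le_sum (f := fun j => x^j/(Nat.factorial j)) ?_ (Finset.self_mem_range_succ k)
  intro i _
  positivity

set_option maxHeartbeats 1000000 in
lemma tail_le {x : ℝ} (hx : 0 < x) {k : ℕ} {c : ℝ} (hc : 1 < c) (hk : c * x ≤ (k:ℝ) + 1) :
    Real.exp x - aa k x ≤ x^(k+1)/(Nat.factorial (k+1)) * (c/(c-1)) := by
  have hsum := Real.summable_pow_div_factorial x
  have h1 : aa k x + ∑' j : ℕ, x^(j+(k+1))/(Nat.factorial (j+(k+1))) = Real.exp x := by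
    rw [exp_tsum]
    exact Summable.sum_add_tsum_nat_add (k+1) hsum
  have hq : x / ((k:ℝ)+2) ≤ 1/c := by
    rw [div_le_div_iff₀ (by positivity) (by positivity)]
    nlinarith
  have hq2 : (0:ℝ) ≤ 1/c := by positivity
  have hq3 : (1:ℝ)/c < 1 := by
    rw [div_lt_one (by positivity)]; exact hc
  have hterm : ∀ j : ℕ, x^(j+(k+1))/(Nat.factorial (j+(k+1))) ≤
      x^(k+1)/(Nat.factorial (k+1)) * (1/c)^j := by
    intro j
    have hfac : ((Nat.factorial (k+1)) : ℝ) * ((k:ℝ)+2)^j ≤ (Nat.factorial (j+(k+1)) : ℝ) := by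
      have := Nat.factorial_mul_pow_le_factorial (m := k+1) (n := j)
      have h2 : ((Nat.factorial (k+1) * (k+1+1)^j : ℕ) : ℝ) ≤ ((Nat.factorial (k+1+j) : ℕ) : ℝ) := by
        exact_mod_cast this
      rw [add_comm j (k+1)]
      push_cast at h2 ⊢
      have e : ((k:ℝ)+1+1) = (k:ℝ)+2 := by ring
      rw [e] at h2
      exact h2
    calc x^(j+(k+1))/(Nat.factorial (j+(k+1)))
        ≤ x^(j+(k+1))/((Nat.factorial (k+1)) * ((k:ℝ)+2)^j) := by
          apply div_le_div_of_nonneg_left (by positivity) (by positivity) hfac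
      _ = x^(k+1)/(Nat.factorial (k+1)) * (x/((k:ℝ)+2))^j := by
          rw [pow_add, div_pow]
          field_simp
      _ ≤ x^(k+1)/(Nat.factorial (k+1)) * (1/c)^j := by
          apply mul_le_mul_of_nonneg_left _ (by positivity)
          exact pow_le_pow_left₀ (by positivity) hq j
  have hsum2 : Summable (fun j : ℕ => x^(j+(k+1))/(Nat.factorial (j+(k+1)))) :=
    (summable_nat_add_iff (k+1)).mpr hsum
  have hsum3 : Summable (fun j : ℕ => x^(k+1)/(Nat.factorial (k+1)) * (1/c)^j) :=
    (summable_geometric_of_lt_one hq2 hq3).mul_left _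
  have h2 : ∑' j : ℕ, x^(j+(k+1))/(Nat.factorial (j+(k+1))) ≤
      x^(k+1)/(Nat.factorial (k+1)) * (c/(c-1)) := by
    calc ∑' j : ℕ, x^(j+(k+1))/(Nat.factorial (j+(k+1)))
        ≤ ∑' j : ℕ, x^(k+1)/(Nat.factorial (k+1)) * (1/c)^j := Summable.tsum_le_tsum hterm hsum2 hsum3
      _ = x^(k+1)/(Nat.factorial (k+1)) * (1-1/c)⁻¹ := by
          rw [tsum_mul_left, tsum_geometric_of_lt_one hq2 hq3]
      _ = x^(k+1)/(Nat.factorial (k+1)) * (c/(c-1)) := by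
          congr 1
          rw [one_sub_div (by positivity)]
          rw [inv_div]
  linarith [h1, h2]

lemma exp_pos' (x : ℝ) : 0 < Real.exp x := Real.exp_pos x

lemma pow_fac_le {x : ℝ} (hx : 0 < x) {K M : ℕ} {c : ℝ} (hc : 1 < c)
    (hK : c * x ≤ (K:ℝ)) (hMK : M ≤ K) (hM : (M:ℝ) ≤ (c-1)*x/2) :
    x^K/(Nat.factorial K) ≤ Real.exp x * (2/(c+1))^M := by
  set q := K - M with hqdef
  have hqM : q + M = K := by omega
  have hfac : ((Nat.factorial q) : ℝ) * ((q:ℝ)+1)^M ≤ (Nat.factorial K : ℝ) := by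
    have := Nat.factorial_mul_pow_le_factorial (m := q) (n := M)
    rw [hqM] at this
    exact_mod_cast this
  have hqR : ((q:ℝ)) = (K:ℝ) - M := by
    rw [hqdef]; push_cast [hMK]; ring
  have hq1 : (c+1)*x/2 ≤ (q:ℝ)+1 := by
    rw [hqR]; linarith
  have hbase : x/((q:ℝ)+1) ≤ 2/(c+1) := by
    rw [div_le_div_iff₀ (by nlinarith) (by nlinarith)]
    nlinarith
  calc x^K/(Nat.factorial K)
      ≤ x^K/((Nat.factorial q) * ((q:ℝ)+1)^M) := by
        apply div_le_div_of_nonneg_left (by positivity) (by positivity) hfac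
    _ = (x^q/(Nat.factorial q)) * (x/((q:ℝ)+1))^M := by
        rw [← hqM, pow_add, div_pow]
        field_simp
    _ ≤ Real.exp x * (2/(c+1))^M := by
        apply mul_le_mul (term_le_exp hx.le q) (pow_le_pow_left₀ (by positivity) hbase M)
          (by positivity) (by positivity)

lemma tendsto_aux (b : ℝ) (hb : 0 < b) :
    Tendsto (fun n : ℕ => (n:ℝ) * Real.exp (-(b*n))) atTop (nhds 0) := by
  have h1 : Tendsto (fun y : ℝ => y * Real.exp (-y)) atTop (nhds 0) := by
    have := Real.tendsto_pow_mul_exp_neg_atTop_nhds_zero 1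
    simpa using this
  have h2 : Tendsto (fun n : ℕ => b * n) atTop atTop := by
    exact Tendsto.const_mul_atTop hb tendsto_natCast_atTop_atTop
  have h3 := h1.comp h2
  have h4 := h3.const_mul (1/b)
  simp only [mul_zero] at h4
  refine h4.congr (fun n => ?_)
  simp only [Function.comp]
  field_simp

set_option maxHeartbeats 2000000 in
lemma tail_main {t c : ℝ} (ht : 0 < t) (hc : 1 < c) (k : ℕ → ℕ)
    (hk : ∀ᶠ n : ℕ in atTop, c * ((n:ℝ) * t) ≤ (k n : ℝ) + 1) :
    Tendsto (fun n : ℕ => (n : ℝ) * (1 - aa (k n) ((n:ℝ) * t) / Real.exp ((n:ℝ) * t)))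
      atTop (nhds 0) := by
  set ρ : ℝ := 2/(c+1) with hρdef
  have hρ0 : 0 < ρ := by positivity
  have hρ1 : ρ < 1 := by
    rw [hρdef, div_lt_one (by linarith)]; linarith
  set β : ℝ := (c-1)*t/2 with hβdef
  have hβ0 : 0 < β := by rw [hβdef]; nlinarith
  set L : ℝ := -Real.log ρ with hLdef
  have hL0 : 0 < L := by
    rw [hLdef, neg_pos]
    exact Real.log_neg hρ0 hρ1
  -- the upper bound sequence
  set B : ℕ → ℝ := fun n => (c/(c-1)) * Real.exp L * ((n:ℝ) * Real.exp (-(L*β*(n:ℝ)))) with hBdef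
  have hBlim : Tendsto B atTop (nhds 0) := by
    have := (tendsto_aux (L*β) (by positivity)).const_mul ((c/(c-1)) * Real.exp L)
    simpa using this
  apply tendsto_of_tendsto_of_tendsto_of_le_of_le' tendsto_const_nhds hBlim
  · -- 0 ≤ term eventually
    filter_upwards [eventually_ge_atTop 1] with n hn
    have hx : (0:ℝ) < n * t := by
      have : (1:ℝ) ≤ (n:ℝ) := by exact_mod_cast hn
      nlinarith
    have h := aa_le_exp hx.le (k n)
    have hE := Real.exp_pos ((n:ℝ)*t)
    have : aa (k n) ((n:ℝ)*t) / Real.exp ((n:ℝ)*t) ≤ 1 := by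
      rw [div_le_one hE]; exact h
    have hn0 : (0:ℝ) ≤ n := Nat.cast_nonneg n
    nlinarith
  · -- term ≤ B n eventually
    have hev2 : ∀ᶠ n : ℕ in atTop, (1:ℝ) ≤ β * n := by
      have : Tendsto (fun n : ℕ => β * n) atTop atTop :=
        Tendsto.const_mul_atTop hβ0 tendsto_natCast_atTop_atTop
      exact this.eventually_ge_atTop 1
    filter_upwards [hk, eventually_ge_atTop 1, hev2] with n hkn hn1 hβn
    set x : ℝ := (n:ℝ) * t with hxdef
    have hn1R : (1:ℝ) ≤ (n:ℝ) := by exact_mod_cast hn1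
    have hx : 0 < x := by rw [hxdef]; nlinarith
    have hE : 0 < Real.exp x := Real.exp_pos x
    set K : ℕ := k n + 1 with hKdef
    have hKR : c * x ≤ (K:ℝ) := by rw [hKdef]; push_cast; exact hkn
    set M : ℕ := ⌊(c-1)*x/2⌋₊ with hMdef
    have hMle : (M:ℝ) ≤ (c-1)*x/2 := Nat.floor_le (by nlinarith)
    have hMge : (c-1)*x/2 - 1 ≤ (M:ℝ) := by
      have := Nat.lt_floor_add_one ((c-1)*x/2)
      push_cast at this ⊢
      linarith [this]
    have hβx : β * (n:ℝ) = (c-1)*x/2 := by rw [hβdef, hxdef]; ring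
    have hMK : M ≤ K := by
      have h1 : (M:ℝ) ≤ (c-1)*x/2 := hMle
      have h2 : (c-1)*x/2 ≤ (K:ℝ) := by nlinarith
      exact_mod_cast le_trans h1 h2
    -- main chain
    have htail := tail_le hx hc (by rw [hKdef] at hKR; push_cast at hKR; linarith : c * x ≤ ((k n):ℝ) + 1)
    have hpf := pow_fac_le hx hc hKR hMK hMle
    have hstep : 1 - aa (k n) x / Real.exp x ≤ (c/(c-1)) * ρ^M := by
      have h2 : 1 - aa (k n) x / Real.exp x = (Real.exp x - aa (k n) x)/Real.exp x := by
        field_simp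
      rw [h2, div_le_iff₀ hE]
      calc Real.exp x - aa (k n) x ≤ x^K/(Nat.factorial K) * (c/(c-1)) := htail
        _ ≤ (Real.exp x * ρ^M) * (c/(c-1)) :=
            mul_le_mul_of_nonneg_right hpf (div_pos (by linarith) (by linarith)).le
        _ = c/(c-1) * ρ^M * Real.exp x := by ring
    have hρM : ρ^M ≤ Real.exp L * Real.exp (-(L*β*(n:ℝ))) := by
      have h1 : ρ^M = Real.exp (-(L * M)) := by
        have hl : Real.log (ρ^M) = -(L*(M:ℝ)) := by
          rw [Real.log_pow, hLdef]; push_cast; ring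
        rw [← hl, Real.exp_log (pow_pos hρ0 M)]
      rw [h1, ← Real.exp_add]
      apply Real.exp_le_exp.mpr
      have : β * (n:ℝ) - 1 ≤ (M:ℝ) := by rw [hβx]; linarith
      nlinarith [hL0, this]
    calc (n:ℝ) * (1 - aa (k n) x / Real.exp x)
        ≤ (n:ℝ) * ((c/(c-1)) * ρ^M) := by
          apply mul_le_mul_of_nonneg_left hstep (Nat.cast_nonneg n)
      _ ≤ B n := by
          have h3 : (0:ℝ) ≤ (n:ℝ)*(c/(c-1)) :=
            mul_nonneg (Nat.cast_nonneg n) (div_pos (by linarith) (by linarith)).le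
          have h4 := mul_le_mul_of_nonneg_left hρM h3
          rw [hBdef]
          simp only []
          nlinarith [h4]

lemma nsmall_lim {f : ℕ → ℝ} {a : ℝ}
    (h : Tendsto (fun n : ℕ => (n:ℝ) * (f n - a)) atTop (nhds 0)) :
    Tendsto f atTop (nhds a) := by
  have h2 : Tendsto (fun n : ℕ => (n:ℝ)*(f n - a) * ((n:ℝ))⁻¹) atTop (nhds 0) := by
    simpa using h.mul tendsto_inv_atTop_nhds_zero_nat
  have h3 : Tendsto (fun n : ℕ => f n - a) atTop (nhds 0) := by
    apply h2.congr'
    filter_upwards [eventually_ge_atTop 1] with n hn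
    have hne : ((n:ℝ)) ≠ 0 := Nat.cast_ne_zero.mpr (by omega)
    field_simp
  have h4 := h3.add_const a
  simpa using h4

lemma nsmall_add {f g : ℕ → ℝ} {a b : ℝ}
    (hf : Tendsto (fun n : ℕ => (n:ℝ) * (f n - a)) atTop (nhds 0))
    (hg : Tendsto (fun n : ℕ => (n:ℝ) * (g n - b)) atTop (nhds 0)) :
    Tendsto (fun n : ℕ => (n:ℝ) * ((f n + g n) - (a + b))) atTop (nhds 0) := by
  have h1 := hf.add hg
  rw [add_zero] at h1
  exact h1.congr (fun n => by ring)

lemma nsmall_sub {f g : ℕ → ℝ} {a b : ℝ}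
    (hf : Tendsto (fun n : ℕ => (n:ℝ) * (f n - a)) atTop (nhds 0))
    (hg : Tendsto (fun n : ℕ => (n:ℝ) * (g n - b)) atTop (nhds 0)) :
    Tendsto (fun n : ℕ => (n:ℝ) * ((f n - g n) - (a - b))) atTop (nhds 0) := by
  have h1 := hf.sub hg
  rw [sub_zero] at h1
  exact h1.congr (fun n => by ring)

lemma nsmall_mul {f g : ℕ → ℝ} {a b : ℝ}
    (hf : Tendsto (fun n : ℕ => (n:ℝ) * (f n - a)) atTop (nhds 0))
    (hg : Tendsto (fun n : ℕ => (n:ℝ) * (g n - b)) atTop (nhds 0)) :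
    Tendsto (fun n : ℕ => (n:ℝ) * ((f n * g n) - (a * b))) atTop (nhds 0) := by
  have hgl := nsmall_lim hg
  have h1 := (hf.mul hgl).add (hg.const_mul a)
  have h2 : (0:ℝ) * b + a * 0 = 0 := by ring
  rw [h2] at h1
  exact h1.congr (fun n => by ring)


lemma nsmall_cmul {f : ℕ → ℝ} {a c : ℝ}
    (hf : Tendsto (fun n : ℕ => (n:ℝ) * (f n - a)) atTop (nhds 0)) :
    Tendsto (fun n : ℕ => (n:ℝ) * (c * f n - c * a)) atTop (nhds 0) := by
  have h1 := hf.const_mul c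
  rw [mul_zero] at h1
  exact h1.congr (fun n => by ring)

lemma rpow_three_half {y : ℝ} (hy : 0 ≤ y) : y^((3:ℝ)/2) = y * Real.sqrt y := by
  rcases eq_or_lt_of_le hy with h | h
  · rw [← h]
    rw [Real.zero_rpow (by norm_num)]
    simp
  · rw [Real.sqrt_eq_rpow]
    rw [show (3:ℝ)/2 = 1 + 1/2 by norm_num, Real.rpow_add h, Real.rpow_one]

set_option maxHeartbeats 4000000 in
/-- For `α ∈ (0,1]`, `0 < t < α` and `m(n) = ⌊α n⌋`, the rescaled first intensity, evaluated
at `x = n t`, converges to `√t / 2` as `n → ∞`. -/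
theorem weyl_pointwise_scaled_below (α t : ℝ) (hα0 : 0 < α) (hα1 : α ≤ 1)
    (ht : 0 < t) (htα : t < α) :
    Tendsto
      (fun n : ℕ =>
        ((r1 n ⌊α * n⌋₊ (n * t)) ^ 2 + (r2 n ⌊α * n⌋₊ (n * t)) ^ 2
            - 2 * (r12 n ⌊α * n⌋₊ (n * t)) ^ 2) /
          ((n : ℝ) ^ ((3 : ℝ) / 2) * t * (r3 n ⌊α * n⌋₊ (n * t)) ^ 2 *
            Real.sqrt ((r1 n ⌊α * n⌋₊ (n * t) + r2 n ⌊α * n⌋₊ (n * t)) ^ 2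
              - 4 * (r12 n ⌊α * n⌋₊ (n * t)) ^ 2)))
      atTop (nhds (Real.sqrt t / 2)) := by
  -- constants
  set c : ℝ := (1 + α/t)/2 with hcdef
  have hαt : 1 < α/t := (one_lt_div ht).mpr htα
  have hc : 1 < c := by rw [hcdef]; linarith
  have hct : c*t = (t+α)/2 := by rw [hcdef]; field_simp
  have hctα : c*t < α := by rw [hct]; linarith
  have hct1 : c*t < 1 := by rw [hct]; linarith
  have hten : Tendsto (fun n : ℕ => (n:ℝ)) atTop atTop := tendsto_natCast_atTop_atTop
  have ev1 : ∀ᶠ n : ℕ in atTop, (1:ℝ) ≤ (1 - c*t)*n :=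
    (Tendsto.const_mul_atTop (by linarith) hten).eventually_ge_atTop 1
  have ev2 : ∀ᶠ n : ℕ in atTop, (3:ℝ) ≤ (α - c*t)*n :=
    (Tendsto.const_mul_atTop (by linarith) hten).eventually_ge_atTop 3
  have ev3 : ∀ᶠ n : ℕ in atTop, (3:ℝ) ≤ α*n :=
    (Tendsto.const_mul_atTop hα0 hten).eventually_ge_atTop 3
  have evm2 : ∀ᶠ n : ℕ in atTop, 2 ≤ ⌊α*(n:ℝ)⌋₊ := by
    filter_upwards [ev3] with n h3
    exact Nat.le_floor (by push_cast; linarith)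
  -- local definitions
  set EE : ℕ → ℝ := fun n => Real.exp ((n:ℝ)*t) with hEE
  set u1 : ℕ → ℝ := fun n => aa n ((n:ℝ)*t) / EE n with hu1
  set u2 : ℕ → ℝ := fun n => aa (⌊α*(n:ℝ)⌋₊) ((n:ℝ)*t) / EE n with hu2
  set v1 : ℕ → ℝ := fun n => aa (n-1) ((n:ℝ)*t) / EE n with hv1
  set v2 : ℕ → ℝ := fun n => aa (⌊α*(n:ℝ)⌋₊-1) ((n:ℝ)*t) / EE n with hv2
  set w1 : ℕ → ℝ := fun n => aa (n-2) ((n:ℝ)*t) / EE n with hw1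
  set w2 : ℕ → ℝ := fun n => aa (⌊α*(n:ℝ)⌋₊-2) ((n:ℝ)*t) / EE n with hw2
  set SS : ℕ → ℝ := fun n => u1 n + u2 n with hSS
  set A1 : ℕ → ℝ := fun n => SS n * w1 n - (v1 n)^2 with hA1
  set A2 : ℕ → ℝ := fun n => SS n * w2 n - (v2 n)^2 with hA2
  set P1 : ℕ → ℝ := fun n => (A1 n)^2 + (A2 n)^2 - 2*(v1 n*v2 n)^2 with hP1
  set P2 : ℕ → ℝ := fun n => (A1 n + A2 n)^2 - 4*(v1 n*v2 n)^2 with hP2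
  set I1 : ℕ → ℝ := fun n => ((n:ℝ)*t)^2*P1 n + 2*((n:ℝ)*t)*SS n*(A1 n*v1 n + A2 n*v2 n)
      + (SS n)^2*((v1 n)^2+(v2 n)^2) with hI1
  set I2 : ℕ → ℝ := fun n => ((n:ℝ)*t)^2*P2 n + 2*((n:ℝ)*t)*SS n*(A1 n+A2 n)*(v1 n+v2 n)
      + (SS n)^2*(v1 n+v2 n)^2 with hI2
  -- tail estimates
  have tk1 : Tendsto (fun n : ℕ => (n:ℝ)*(1 - aa n ((n:ℝ)*t)/Real.exp ((n:ℝ)*t))) atTop (nhds 0) := by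
    apply tail_main ht hc (fun n => n)
    filter_upwards with n
    have hn0 : (0:ℝ) ≤ n := n.cast_nonneg
    nlinarith
  have tk2 : Tendsto (fun n : ℕ => (n:ℝ)*(1 - aa (n-1) ((n:ℝ)*t)/Real.exp ((n:ℝ)*t))) atTop (nhds 0) := by
    apply tail_main ht hc (fun n => n-1)
    filter_upwards [eventually_ge_atTop 1] with n hn
    have h : ((n-1:ℕ):ℝ) = (n:ℝ) - 1 := by
      have : (1:ℕ) ≤ n := hn
      push_cast [this]; ring
    rw [h]
    have hn0 : (0:ℝ) ≤ n := n.cast_nonneg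
    nlinarith
  have tk3 : Tendsto (fun n : ℕ => (n:ℝ)*(1 - aa (n-2) ((n:ℝ)*t)/Real.exp ((n:ℝ)*t))) atTop (nhds 0) := by
    apply tail_main ht hc (fun n => n-2)
    filter_upwards [ev1, eventually_ge_atTop 2] with n h1 hn
    have h : ((n-2:ℕ):ℝ) = (n:ℝ) - 2 := by
      have : (2:ℕ) ≤ n := hn
      push_cast [this]; ring
    rw [h]
    nlinarith
  have tk4 : Tendsto (fun n : ℕ => (n:ℝ)*(1 - aa (⌊α*(n:ℝ)⌋₊) ((n:ℝ)*t)/Real.exp ((n:ℝ)*t))) atTop (nhds 0) := by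
    apply tail_main ht hc (fun n => ⌊α*(n:ℝ)⌋₊)
    filter_upwards with n
    have hfl := Nat.lt_floor_add_one (α*(n:ℝ))
    have hn0 : (0:ℝ) ≤ n := n.cast_nonneg
    nlinarith
  have tk5 : Tendsto (fun n : ℕ => (n:ℝ)*(1 - aa (⌊α*(n:ℝ)⌋₊-1) ((n:ℝ)*t)/Real.exp ((n:ℝ)*t))) atTop (nhds 0) := by
    apply tail_main ht hc (fun n => ⌊α*(n:ℝ)⌋₊-1)
    filter_upwards [ev2, evm2] with n h2 hm
    have hfl := Nat.lt_floor_add_one (α*(n:ℝ))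
    have h : ((⌊α*(n:ℝ)⌋₊-1:ℕ):ℝ) = (⌊α*(n:ℝ)⌋₊:ℝ) - 1 := by
      have : (1:ℕ) ≤ ⌊α*(n:ℝ)⌋₊ := by omega
      push_cast [this]; ring
    rw [h]
    nlinarith
  have tk6 : Tendsto (fun n : ℕ => (n:ℝ)*(1 - aa (⌊α*(n:ℝ)⌋₊-2) ((n:ℝ)*t)/Real.exp ((n:ℝ)*t))) atTop (nhds 0) := by
    apply tail_main ht hc (fun n => ⌊α*(n:ℝ)⌋₊-2)
    filter_upwards [ev2, evm2] with n h2 hm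
    have hfl := Nat.lt_floor_add_one (α*(n:ℝ))
    have h : ((⌊α*(n:ℝ)⌋₊-2:ℕ):ℝ) = (⌊α*(n:ℝ)⌋₊:ℝ) - 2 := by
      push_cast [hm]; ring
    rw [h]
    nlinarith
  -- base nsmall facts
  have nu1 : Tendsto (fun n : ℕ => (n:ℝ)*(u1 n - 1)) atTop (nhds 0) := by
    have h := tk1.neg; rw [neg_zero] at h
    exact h.congr fun n => by simp only [hu1, hEE]; ring
  have nu2 : Tendsto (fun n : ℕ => (n:ℝ)*(u2 n - 1)) atTop (nhds 0) := by
    have h := tk4.neg; rw [neg_zero] at h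
    exact h.congr fun n => by simp only [hu2, hEE]; ring
  have nv1 : Tendsto (fun n : ℕ => (n:ℝ)*(v1 n - 1)) atTop (nhds 0) := by
    have h := tk2.neg; rw [neg_zero] at h
    exact h.congr fun n => by simp only [hv1, hEE]; ring
  have nv2 : Tendsto (fun n : ℕ => (n:ℝ)*(v2 n - 1)) atTop (nhds 0) := by
    have h := tk5.neg; rw [neg_zero] at h
    exact h.congr fun n => by simp only [hv2, hEE]; ring
  have nw1 : Tendsto (fun n : ℕ => (n:ℝ)*(w1 n - 1)) atTop (nhds 0) := by
    have h := tk3.neg; rw [neg_zero] at h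
    exact h.congr fun n => by simp only [hw1, hEE]; ring
  have nw2 : Tendsto (fun n : ℕ => (n:ℝ)*(w2 n - 1)) atTop (nhds 0) := by
    have h := tk6.neg; rw [neg_zero] at h
    exact h.congr fun n => by simp only [hw2, hEE]; ring
  -- derived nsmall facts
  have nS : Tendsto (fun n : ℕ => (n:ℝ)*(SS n - 2)) atTop (nhds 0) := by
    have h := nsmall_add nu1 nu2
    exact h.congr fun n => by simp only [hSS]; norm_num
  have nA1 : Tendsto (fun n : ℕ => (n:ℝ)*(A1 n - 1)) atTop (nhds 0) := by
    have h := nsmall_sub (nsmall_mul nS nw1) (nsmall_mul nv1 nv1)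
    exact h.congr fun n => by simp only [hA1]; ring_nf
  have nA2 : Tendsto (fun n : ℕ => (n:ℝ)*(A2 n - 1)) atTop (nhds 0) := by
    have h := nsmall_sub (nsmall_mul nS nw2) (nsmall_mul nv2 nv2)
    exact h.congr fun n => by simp only [hA2]; ring_nf
  have nP1' : Tendsto (fun n : ℕ => (n:ℝ)*(P1 n - 0)) atTop (nhds 0) := by
    have h := nsmall_sub (nsmall_add (nsmall_mul nA1 nA1) (nsmall_mul nA2 nA2))
      (nsmall_cmul (c := 2) (nsmall_mul (nsmall_mul nv1 nv2) (nsmall_mul nv1 nv2)))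
    refine h.congr fun n => ?_
    simp only [hP1]; ring
  have nP2' : Tendsto (fun n : ℕ => (n:ℝ)*(P2 n - 0)) atTop (nhds 0) := by
    have hA12 := nsmall_add nA1 nA2
    have h := nsmall_sub (nsmall_mul hA12 hA12)
      (nsmall_cmul (c := 4) (nsmall_mul (nsmall_mul nv1 nv2) (nsmall_mul nv1 nv2)))
    refine h.congr fun n => ?_
    simp only [hP2]; ring
  -- plain limits
  have lS : Tendsto SS atTop (nhds 2) := nsmall_lim nS
  have lA1 : Tendsto A1 atTop (nhds 1) := nsmall_lim nA1
  have lA2 : Tendsto A2 atTop (nhds 1) := nsmall_lim nA2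
  have lv1 : Tendsto v1 atTop (nhds 1) := nsmall_lim nv1
  have lv2 : Tendsto v2 atTop (nhds 1) := nsmall_lim nv2
  have hinv : Tendsto (fun n : ℕ => ((n:ℝ)*t)⁻¹) atTop (nhds 0) :=
    tendsto_inv_atTop_zero.comp (hten.atTop_mul_const ht)
  -- limits of I1/x and I2/x
  have hI1G : Tendsto (fun n : ℕ => t*((n:ℝ)*(P1 n - 0)) + 2*SS n*(A1 n*v1 n + A2 n*v2 n)
      + ((SS n)^2*((v1 n)^2+(v2 n)^2))*(((n:ℝ)*t)⁻¹)) atTop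
      (nhds (t*0 + 2*2*(1*1+1*1) + (2^2*(1^2+1^2))*0)) := by
    refine Tendsto.add (Tendsto.add ?_ ?_) ?_
    · exact tendsto_const_nhds.mul nP1'
    · exact (tendsto_const_nhds.mul lS).mul ((lA1.mul lv1).add (lA2.mul lv2))
    · exact ((lS.pow 2).mul ((lv1.pow 2).add (lv2.pow 2))).mul hinv
  have hI1x : Tendsto (fun n : ℕ => I1 n/((n:ℝ)*t)) atTop (nhds 8) := by
    have hval : (t*0 + 2*2*(1*1+1*1) + (2^2*((1:ℝ)^2+1^2))*0 : ℝ) = 8 := by norm_num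
    rw [hval] at hI1G
    apply hI1G.congr'
    filter_upwards [eventually_ge_atTop 1] with n hn
    have hxn : ((n:ℝ)*t) ≠ 0 := by
      have h0 : (0:ℝ) < n := by exact_mod_cast (by omega : 0 < n)
      positivity
    simp only [hI1]
    field_simp
    ring
  have hI2G : Tendsto (fun n : ℕ => t*((n:ℝ)*(P2 n - 0)) + 2*SS n*(A1 n+A2 n)*(v1 n+v2 n)
      + ((SS n)^2*(v1 n+v2 n)^2)*(((n:ℝ)*t)⁻¹)) atTop
      (nhds (t*0 + 2*2*(1+1)*(1+1) + (2^2*((1:ℝ)+1)^2)*0)) := by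
    refine Tendsto.add (Tendsto.add ?_ ?_) ?_
    · exact tendsto_const_nhds.mul nP2'
    · exact ((tendsto_const_nhds.mul lS).mul (lA1.add lA2)).mul (lv1.add lv2)
    · exact ((lS.pow 2).mul ((lv1.add lv2).pow 2)).mul hinv
  have hI2x : Tendsto (fun n : ℕ => I2 n/((n:ℝ)*t)) atTop (nhds 16) := by
    have hval : (t*0 + 2*2*(1+1)*(1+1) + (2^2*((1:ℝ)+1)^2)*0 : ℝ) = 16 := by norm_num
    rw [hval] at hI2G
    apply hI2G.congr'
    filter_upwards [eventually_ge_atTop 1] with n hn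
    have hxn : ((n:ℝ)*t) ≠ 0 := by
      have h0 : (0:ℝ) < n := by exact_mod_cast (by omega : 0 < n)
      positivity
    simp only [hI2]
    field_simp
    ring
  -- limit of the model expression
  have h16 : Real.sqrt 16 = 4 := by
    rw [show (16:ℝ) = 4^2 by norm_num, Real.sqrt_sq (by norm_num)]
  have hRHS : Tendsto (fun n : ℕ => Real.sqrt t *
      ((I1 n/((n:ℝ)*t))/((SS n)^2*Real.sqrt (I2 n/((n:ℝ)*t))))) atTop
      (nhds (Real.sqrt t/2)) := by
    have h := tendsto_const_nhds (x := Real.sqrt t) (f := atTop (α := ℕ))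
    have h2 := h.mul (hI1x.div ((lS.pow 2).mul hI2x.sqrt) (by rw [h16]; norm_num))
    have hval : Real.sqrt t * (8/((2:ℝ)^2*Real.sqrt 16)) = Real.sqrt t/2 := by
      rw [h16]; ring
    rw [hval] at h2
    exact h2
  -- eventual positivity
  have hI2pos : ∀ᶠ n : ℕ in atTop, (0:ℝ) < I2 n/((n:ℝ)*t) :=
    hI2x.eventually (eventually_gt_nhds (by norm_num))
  have hSpos : ∀ᶠ n : ℕ in atTop, (1:ℝ) < SS n :=
    lS.eventually (eventually_gt_nhds (by norm_num))
  -- conclude via eventual equality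
  apply hRHS.congr'
  filter_upwards [eventually_ge_atTop 2, evm2, hI2pos, hSpos] with n hn2 hm2 hIpos hS1
  obtain ⟨p, rfl⟩ : ∃ p, n = p + 2 := ⟨n - 2, by omega⟩
  obtain ⟨q, hq⟩ : ∃ q, ⌊α*((p+2:ℕ):ℝ)⌋₊ = q + 2 := ⟨⌊α*((p+2:ℕ):ℝ)⌋₊ - 2, by omega⟩
  have hx : (0:ℝ) < ((p+2:ℕ):ℝ)*t := by
    have : (0:ℝ) < ((p+2:ℕ):ℝ) := by positivity
    positivity
  have hEpos : 0 < EE (p+2) := by simp only [hEE]; exact Real.exp_pos _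
  have hEne : EE (p+2) ≠ 0 := ne_of_gt hEpos
  -- aa values in terms of u, v, w
  have ha1 : aa (p+2) (((p+2:ℕ):ℝ)*t) = u1 (p+2) * EE (p+2) := by
    simp only [hu1]; field_simp
  have ha2 : aa (q+2) (((p+2:ℕ):ℝ)*t) = u2 (p+2) * EE (p+2) := by
    simp only [hu2]; rw [hq]; field_simp
  have ha3 : aa (p+1) (((p+2:ℕ):ℝ)*t) = v1 (p+2) * EE (p+2) := by
    simp only [hv1]
    rw [show (p+2)-1 = p+1 from by omega]
    field_simp
  have ha4 : aa (q+1) (((p+2:ℕ):ℝ)*t) = v2 (p+2) * EE (p+2) := by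
    simp only [hv2]; rw [hq]
    rw [show (q+2)-1 = q+1 from by omega]
    field_simp
  have ha5 : aa p (((p+2:ℕ):ℝ)*t) = w1 (p+2) * EE (p+2) := by
    simp only [hw1]
    rw [show (p+2)-2 = p from by omega]
    field_simp
  have ha6 : aa q (((p+2:ℕ):ℝ)*t) = w2 (p+2) * EE (p+2) := by
    simp only [hw2]; rw [hq]
    rw [show (q+2)-2 = q from by omega]
    field_simp
  -- bb, cc identities
  have hbbn : bb (p+2) (((p+2:ℕ):ℝ)*t) = (((p+2:ℕ):ℝ)*t) * aa (p+1) (((p+2:ℕ):ℝ)*t) :=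
    bb_eq (p+1) _
  have hbbm : bb (q+2) (((p+2:ℕ):ℝ)*t) = (((p+2:ℕ):ℝ)*t) * aa (q+1) (((p+2:ℕ):ℝ)*t) :=
    bb_eq (q+1) _
  have hccn : cc (p+2) (((p+2:ℕ):ℝ)*t) = (((p+2:ℕ):ℝ)*t)^2 * aa p (((p+2:ℕ):ℝ)*t)
      + (((p+2:ℕ):ℝ)*t) * aa (p+1) (((p+2:ℕ):ℝ)*t) := cc_eq p _
  have hccm : cc (q+2) (((p+2:ℕ):ℝ)*t) = (((p+2:ℕ):ℝ)*t)^2 * aa q (((p+2:ℕ):ℝ)*t)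
      + (((p+2:ℕ):ℝ)*t) * aa (q+1) (((p+2:ℕ):ℝ)*t) := cc_eq q _
  -- main algebraic identities
  have hnum : (r1 (p+2) (⌊α*((p+2:ℕ):ℝ)⌋₊) (((p+2:ℕ):ℝ)*t))^2
      + (r2 (p+2) (⌊α*((p+2:ℕ):ℝ)⌋₊) (((p+2:ℕ):ℝ)*t))^2
      - 2*(r12 (p+2) (⌊α*((p+2:ℕ):ℝ)⌋₊) (((p+2:ℕ):ℝ)*t))^2
      = (EE (p+2))^4*((((p+2:ℕ):ℝ)*t))^2*I1 (p+2) := by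
    simp only [r1, r2, r3, r12]
    rw [hq, hbbn, hbbm, hccn, hccm, ha1, ha2, ha3, ha4, ha5, ha6]
    simp only [hI1, hP1, hA1, hA2, hSS]
    ring
  have hden : (r1 (p+2) (⌊α*((p+2:ℕ):ℝ)⌋₊) (((p+2:ℕ):ℝ)*t)
      + r2 (p+2) (⌊α*((p+2:ℕ):ℝ)⌋₊) (((p+2:ℕ):ℝ)*t))^2
      - 4*(r12 (p+2) (⌊α*((p+2:ℕ):ℝ)⌋₊) (((p+2:ℕ):ℝ)*t))^2
      = ((EE (p+2))^2*((((p+2:ℕ):ℝ)*t)))^2*I2 (p+2) := by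
    simp only [r1, r2, r3, r12]
    rw [hq, hbbn, hbbm, hccn, hccm, ha1, ha2, ha3, ha4, ha5, ha6]
    simp only [hI2, hP2, hA1, hA2, hSS]
    ring
  have hr3 : r3 (p+2) (⌊α*((p+2:ℕ):ℝ)⌋₊) (((p+2:ℕ):ℝ)*t) = SS (p+2) * EE (p+2) := by
    simp only [r3]
    rw [hq, ha1, ha2]
    simp only [hSS]
    ring
  rw [hnum, hden, hr3]
  rw [Real.sqrt_mul (by positivity) (I2 (p+2))]
  rw [Real.sqrt_sq (by positivity)]
  rw [show Real.sqrt (I2 (p+2)) = Real.sqrt (((p+2:ℕ):ℝ)*t) * Real.sqrt (I2 (p+2)/((((p+2:ℕ):ℝ))*t)) from by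
    rw [← Real.sqrt_mul hx.le]
    congr 1
    field_simp]
  rw [Real.sqrt_mul (by positivity : (0:ℝ) ≤ ((p+2:ℕ):ℝ)) t]
  rw [rpow_three_half (by positivity : (0:ℝ) ≤ ((p+2:ℕ):ℝ))]
  have hSne : SS (p+2) ≠ 0 := by linarith
  have hYpos : 0 < Real.sqrt (I2 (p+2)/((((p+2:ℕ):ℝ))*t)) := Real.sqrt_pos.mpr hIpos
  set Y : ℝ := Real.sqrt (I2 (p+2)/((((p+2:ℕ):ℝ))*t)) with hY
  set sn : ℝ := Real.sqrt ((p+2:ℕ):ℝ) with hsn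
  set st : ℝ := Real.sqrt t with hst
  have hsn2 : sn*sn = ((p+2:ℕ):ℝ) := Real.mul_self_sqrt (by positivity)
  have hst2 : st*st = t := Real.mul_self_sqrt ht.le
  have hsnpos : 0 < sn := by rw [hsn]; exact Real.sqrt_pos.mpr (by positivity)
  have hstpos : 0 < st := by rw [hst]; exact Real.sqrt_pos.mpr ht
  rw [← hsn2, ← hst2]
  field_simp
end

section
/- Let x > 0 be a real number and let n, m \ge 0 be integers. With r_3 = a_n(x) + a_m(x), r_{12} = b_n(x) b_m(x), r_1 = r_3 c_n(x) - b_n(x)^2, and r_2 = r_3 c_m(x) - b_m(x)^2, one has (r_1 + r_2)^2 - 4 r_{12}^2 \ge r_1^2 + r_2^2 - 2 r_{12}^2. -/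
open Filter

lemma icc_sum_eq_range {k : ℕ} (f : ℕ → ℝ) (h0 : f 0 = 0) :
    ∑ j ∈ Finset.Icc 1 k, f j = ∑ j ∈ Finset.range (k + 1), f j := by
  apply Finset.sum_subset
  · intro j hj
    simp only [Finset.mem_Icc] at hj
    simp [Nat.lt_succ_iff, hj.2]
  · intro j hj hj'
    simp only [Finset.mem_Icc, not_and_or, not_le] at hj'
    rcases hj' with h | h
    · interval_cases j; exact h0
    · exact absurd (Finset.mem_range.mp hj) (by omega)

lemma aa_nonneg (k : ℕ) {x : ℝ} (hx : 0 ≤ x) : 0 ≤ aa k x :=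
  Finset.sum_nonneg fun j _ => div_nonneg (pow_nonneg hx j) (Nat.cast_nonneg _)

lemma bb_nonneg (k : ℕ) {x : ℝ} (hx : 0 ≤ x) : 0 ≤ bb k x :=
  Finset.sum_nonneg fun j _ =>
    div_nonneg (mul_nonneg (Nat.cast_nonneg _) (pow_nonneg hx j)) (Nat.cast_nonneg _)

lemma cc_nonneg (k : ℕ) {x : ℝ} (hx : 0 ≤ x) : 0 ≤ cc k x :=
  Finset.sum_nonneg fun j _ =>
    div_nonneg (mul_nonneg (sq_nonneg _) (pow_nonneg hx j)) (Nat.cast_nonneg _)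

lemma bb_sq_le (k : ℕ) {x : ℝ} (hx : 0 ≤ x) : bb k x ^ 2 ≤ aa k x * cc k x := by
  have hb : bb k x = ∑ j ∈ Finset.range (k + 1), (j : ℝ) * x ^ j / (Nat.factorial j) := by
    exact icc_sum_eq_range _ (by simp)
  have hc : cc k x = ∑ j ∈ Finset.range (k + 1), (j : ℝ) ^ 2 * x ^ j / (Nat.factorial j) := by
    exact icc_sum_eq_range _ (by simp)
  rw [hb, hc, aa]
  apply Finset.sum_sq_le_sum_mul_sum_of_sq_eq_mul
  · intro j _
    exact div_nonneg (pow_nonneg hx j) (Nat.cast_nonneg _)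
  · intro j _
    exact div_nonneg (mul_nonneg (sq_nonneg _) (pow_nonneg hx j)) (Nat.cast_nonneg _)
  · intro j _
    ring

/-- `(r₁ + r₂)² - 4 r₁₂² ≥ r₁² + r₂² - 2 r₁₂²`. -/
theorem weyl_sqrt_lower_bound (x : ℝ) (hx : 0 < x) (n m : ℕ) :
    (r1 n m x + r2 n m x) ^ 2 - 4 * (r12 n m x) ^ 2 ≥
      (r1 n m x) ^ 2 + (r2 n m x) ^ 2 - 2 * (r12 n m x) ^ 2 := by
  have hx' := hx.le
  have han := aa_nonneg n hx'
  have ham := aa_nonneg m hx'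
  have hbn := bb_nonneg n hx'
  have hbm := bb_nonneg m hx'
  have hcn := cc_nonneg n hx'
  have hcm := cc_nonneg m hx'
  have h1 : aa m x * cc n x ≤ r1 n m x := by
    have := bb_sq_le n hx'
    simp only [r1, r3]
    nlinarith
  have h2 : aa n x * cc m x ≤ r2 n m x := by
    have := bb_sq_le m hx'
    simp only [r2, r3]
    nlinarith
  have key : r12 n m x ^ 2 ≤ r1 n m x * r2 n m x := by
    have hn := bb_sq_le n hx'
    have hm := bb_sq_le m hx'
    have h3 : bb n x ^ 2 * bb m x ^ 2 ≤ (aa m x * cc n x) * (aa n x * cc m x) := by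
      calc bb n x ^ 2 * bb m x ^ 2 ≤ (aa n x * cc n x) * (aa m x * cc m x) := by
            apply mul_le_mul hn hm (sq_nonneg _) (mul_nonneg han hcn)
        _ = (aa m x * cc n x) * (aa n x * cc m x) := by ring
    have h4 : (aa m x * cc n x) * (aa n x * cc m x) ≤ r1 n m x * r2 n m x :=
      mul_le_mul h1 h2 (mul_nonneg han hcm) (le_trans (mul_nonneg ham hcn) h1)
    calc r12 n m x ^ 2 = bb n x ^ 2 * bb m x ^ 2 := by rw [r12]; ring
      _ ≤ _ := le_trans h3 h4
  nlinarith [key]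
end

section
/- Let n > m \ge 0 be integers and x > 0 a real number. With a_k = \sum_{j=0}^k x^j/j! and c_k = \sum_{j=1}^k j^2 x^j/j!, one has c_m / (x (a_n + a_m)) \le m^3 (m+1) / (1 + x^2). -/
open Filter

lemma aa_pos (k : ℕ) {x : ℝ} (hx : 0 < x) : 0 < aa k x := by
  unfold aa
  apply Finset.sum_pos
  · intro j _; positivity
  · exact ⟨0, Finset.mem_range.mpr (Nat.succ_pos k)⟩

lemma cc_eq_s19 (m : ℕ) (x : ℝ) :
    cc m x = ∑ i ∈ Finset.range m, ((1 + i : ℕ) : ℝ) ^ 2 * x ^ (1 + i) / (Nat.factorial (1 + i)) := by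
  unfold cc
  rw [← Finset.Ico_add_one_right_eq_Icc, Finset.sum_Ico_eq_sum_range]
  simp

lemma key1 (m : ℕ) {x : ℝ} (hx : 0 < x) : cc m x ≤ (m : ℝ) ^ 2 * (x * aa m x) := by
  rw [cc_eq_s19]
  have step : ∑ i ∈ Finset.range m, ((1 + i : ℕ) : ℝ) ^ 2 * x ^ (1 + i) / (Nat.factorial (1 + i))
      ≤ ∑ i ∈ Finset.range m, (m : ℝ) ^ 2 * x ^ (1 + i) / (Nat.factorial i) := by
    apply Finset.sum_le_sum
    intro i hi
    have hi' : 1 + i ≤ m := by simp at hi; omega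
    gcongr
    omega
  refine step.trans ?_
  have heq : ∑ i ∈ Finset.range m, (m : ℝ) ^ 2 * x ^ (1 + i) / (Nat.factorial i)
      = (m : ℝ) ^ 2 * (x * ∑ i ∈ Finset.range m, x ^ i / (Nat.factorial i)) := by
    rw [Finset.mul_sum, Finset.mul_sum]
    apply Finset.sum_congr rfl
    intro i _
    rw [pow_add, pow_one]
    ring
  rw [heq]
  gcongr
  unfold aa
  apply Finset.sum_le_sum_of_subset_of_nonneg (Finset.range_subset_range.mpr (Nat.le_succ m))
  intro j _ _
  positivity

lemma key2 {m n : ℕ} (hmn : m < n) {x : ℝ} (hx : 0 < x) :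
    cc m x * x ≤ (m : ℝ) ^ 2 * ((m : ℝ) + 1) * aa n x := by
  rw [cc_eq_s19, Finset.sum_mul]
  have step : ∑ i ∈ Finset.range m, ((1 + i : ℕ) : ℝ) ^ 2 * x ^ (1 + i) / (Nat.factorial (1 + i)) * x
      ≤ ∑ i ∈ Finset.range m, (m : ℝ) ^ 2 * ((m : ℝ) + 1) * (x ^ (2 + i) / (Nat.factorial (2 + i))) := by
    apply Finset.sum_le_sum
    intro i hi
    have hi' : 1 + i ≤ m := by simp at hi; omega
    have hnat : (1 + i) ^ 2 * (2 + i) ≤ m ^ 2 * (m + 1) :=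
      Nat.mul_le_mul (Nat.pow_le_pow_left hi' 2) (by omega)
    have hfact : (Nat.factorial (2 + i) : ℝ) = ((2 + i : ℕ) : ℝ) * (Nat.factorial (1 + i)) := by
      have h2 : 2 + i = (1 + i) + 1 := by omega
      rw [h2, Nat.factorial_succ]
      push_cast
      ring
    have hxp : x ^ (1 + i) * x = x ^ (2 + i) := by
      rw [← pow_succ]
      congr 1
      omega
    rw [div_mul_eq_mul_div, mul_assoc, hxp, ← mul_div_assoc]
    rw [div_le_div_iff₀ (by positivity) (by positivity)]
    have hnat' : ((1 + i : ℕ) : ℝ) ^ 2 * ((2 + i : ℕ) : ℝ) ≤ (m : ℝ) ^ 2 * ((m : ℝ) + 1) := by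
      exact_mod_cast hnat
    have hfpos : (0:ℝ) ≤ (Nat.factorial (1 + i) : ℝ) := by positivity
    calc ((1 + i : ℕ) : ℝ) ^ 2 * x ^ (2 + i) * (Nat.factorial (2 + i) : ℝ)
        = (((1 + i : ℕ) : ℝ) ^ 2 * ((2 + i : ℕ) : ℝ)) * ((Nat.factorial (1 + i) : ℝ) * x ^ (2 + i)) := by
          rw [hfact]; ring
      _ ≤ ((m : ℝ) ^ 2 * ((m : ℝ) + 1)) * ((Nat.factorial (1 + i) : ℝ) * x ^ (2 + i)) := by
          gcongr
      _ = (m : ℝ) ^ 2 * ((m : ℝ) + 1) * x ^ (2 + i) * (Nat.factorial (1 + i) : ℝ) := by ring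
  refine step.trans ?_
  rw [← Finset.mul_sum]
  gcongr
  have hIco : ∑ i ∈ Finset.range m, x ^ (2 + i) / (Nat.factorial (2 + i))
      = ∑ j ∈ Finset.Ico 2 (2 + m), x ^ j / (Nat.factorial j) := by
    rw [Finset.sum_Ico_eq_sum_range]
    simp
  rw [hIco]
  unfold aa
  apply Finset.sum_le_sum_of_subset_of_nonneg
  · intro j hj
    simp only [Finset.mem_Ico] at hj
    simp only [Finset.mem_range]
    omega
  · intro j _ _
    positivity


/-- For `n > m ≥ 0` and `x > 0`, `c_m/(x (a_n + a_m)) ≤ m³(m+1)/(1 + x²)`. -/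
theorem weyl_cm_bound (n m : ℕ) (hnm : m < n) (x : ℝ) (hx : 0 < x) :
    cc m x / (x * (aa n x + aa m x)) ≤ (m : ℝ) ^ 3 * ((m : ℝ) + 1) / (1 + x ^ 2) := by
  have han := aa_pos n hx
  have ham := aa_pos m hx
  have hd1 : 0 < x * (aa n x + aa m x) := by positivity
  have hd2 : (0:ℝ) < 1 + x ^ 2 := by positivity
  rw [div_le_div_iff₀ hd1 hd2]
  have h1 := key1 m hx
  have h2 := key2 hnm hx
  have h2' : cc m x * x * x ≤ (m : ℝ) ^ 2 * ((m : ℝ) + 1) * aa n x * x :=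
    mul_le_mul_of_nonneg_right h2 hx.le
  rcases Nat.eq_zero_or_pos m with hm | hm
  · subst hm
    simp [cc]
  · have hm1 : (1:ℝ) ≤ (m:ℝ) := by exact_mod_cast hm
    have c1 : (m : ℝ) ^ 2 ≤ (m : ℝ) ^ 3 * ((m : ℝ) + 1) := by nlinarith
    have c2 : (m : ℝ) ^ 2 * ((m : ℝ) + 1) ≤ (m : ℝ) ^ 3 * ((m : ℝ) + 1) := by nlinarith
    have e1 : (m : ℝ) ^ 2 * (x * aa m x) ≤ (m : ℝ) ^ 3 * ((m : ℝ) + 1) * (x * aa m x) :=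
      mul_le_mul_of_nonneg_right c1 (by positivity)
    have e2 : (m : ℝ) ^ 2 * ((m : ℝ) + 1) * aa n x * x ≤ (m : ℝ) ^ 3 * ((m : ℝ) + 1) * (x * aa n x) := by
      have := mul_le_mul_of_nonneg_right c2 (mul_nonneg han.le hx.le)
      nlinarith
    nlinarith [h1, h2', e1, e2]
end
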